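/- Let T be a normal subsemigroup of G ≀ I_n contained in the centralizer of the idempotents. For idempotents e, f of I_n of equal rank, the groups T_e = T ∩ H_e and T_f = T ∩ H_f are isomorphic; moreover the image T_e Ω in G^m (m = rk(e)) is a normal, permutation-invariant subgroup of G^m, and T_e Ω = T_f Ω. -/

import Mathlib

/-- Multiplication on `G⁰ = G ∪ {0}`, modelled as `Option G`, with `0` absorbing. -/
def omul {G : Type*} [Group G] : Option G → Option G → Option G
  | some x, some y => some (x * y)
  | _, _ => none

lemma omul_isSome {G : Type*} [Group G] (x y : Option G) :
    (omul x y).isSome ↔ x.isSome ∧ y.isSome := by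
  cases x <;> cases y <;> simp [omul]

/-- The partial wreath product `G ≀ I_n`: pairs `(g; a)` with `a` a partial bijection of
`Fin n` (an element of the symmetric inverse monoid `I_n`) and `g ∈ (G⁰)ⁿ`,
where `g i ≠ 0` iff `i ∈ dom a`. -/
structure GWI (G : Type*) [Group G] (n : ℕ) where
  g : Fin n → Option G
  a : PEquiv (Fin n) (Fin n)
  compat : ∀ i, (g i).isSome ↔ (a i).isSome

namespace GWI

variable {G : Type*} [Group G] {n : ℕ}

@[ext] lemma ext {x y : GWI G n} (hg : x.g = y.g) (ha : x.a = y.a) : x = y := by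
  cases x; cases y; simp_all

/-- Multiplication in `G ≀ I_n`: `(g;a)(h;b) = (g ⬝ h_a; ab)`. -/
def mul (x y : GWI G n) : GWI G n where
  g := fun i => omul (x.g i) ((x.a i).bind y.g)
  a := x.a.trans y.a
  compat := by
    intro i
    rw [omul_isSome, x.compat i]
    show _ ↔ ((x.a i).bind y.a).isSome
    cases h : x.a i with
    | none => simp
    | some j => simp [y.compat j]

/-- The identity of `G ≀ I_n`. -/
def one : GWI G n where
  g := fun _ => some 1
  a := PEquiv.refl (Fin n)
  compat := by intro i; simp [PEquiv.refl]

/-- The inverse `(g;a)⁻¹ = (g_{a⁻¹}⁻¹; a⁻¹)` in `G ≀ I_n`. -/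
def inv (x : GWI G n) : GWI G n where
  g := fun i => ((x.a.symm i).bind x.g).map (·⁻¹)
  a := x.a.symm
  compat := by
    intro i
    cases h : x.a.symm i with
    | none => simp [h]
    | some j =>
        have : (x.a j).isSome := by
          rw [x.a.eq_some_iff] at h
          simp [h]
        simp [h, x.compat j, this]

/-- Green's relation `R`, relative to a multiplication `m` (for a monoid). -/
def gR {α : Type*} (m : α → α → α) (u v : α) : Prop :=
  (∃ s, m u s = v) ∧ (∃ t, m v t = u)

/-- Green's relation `L`, relative to a multiplication `m`. -/
def gL {α : Type*} (m : α → α → α) (u v : α) : Prop :=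
  (∃ s, m s u = v) ∧ (∃ t, m t v = u)

/-- Green's relation `H`. -/
def gH {α : Type*} (m : α → α → α) (u v : α) : Prop := gR m u v ∧ gL m u v

/-- Green's relation `D`. -/
def gD {α : Type*} (m : α → α → α) (u v : α) : Prop := ∃ w, gR m u w ∧ gL m w v

/-- Green's relation `J`. -/
def gJ {α : Type*} (m : α → α → α) (u v : α) : Prop :=
  (∃ s t, m (m s u) t = v) ∧ (∃ s t, m (m s v) t = u)

/-- The rank of an element of `I_n`: the size of its domain. -/
def rk (a : PEquiv (Fin n) (Fin n)) : ℕ :=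
  (Finset.univ.filter fun i => (a i).isSome).card

/-- The order preserving enumeration of the domain of an idempotent of `I_n`. -/
def domEnum (e : PEquiv (Fin n) (Fin n)) : Fin (rk e) → Fin n :=
  fun k => ((Finset.univ.filter fun i => (e i).isSome).orderIsoOfFin rfl k : Fin n)

-- ===== aux =====

def IsPid (a : PEquiv (Fin n) (Fin n)) : Prop := ∀ i j, a i = some j → j = i

lemma trans_apply' (p q : PEquiv (Fin n) (Fin n)) (i : Fin n) : p.trans q i = (p i).bind q := rfl

lemma pid_of_idem {e : PEquiv (Fin n) (Fin n)} (he : e.trans e = e) : IsPid e := by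
  intro i j h
  have h1 : e.trans e i = e i := by rw [he]
  rw [trans_apply', h] at h1
  simp only [Option.bind_some] at h1  -- h1 : e j = some j
  exact e.inj (Option.mem_def.mpr h1) (Option.mem_def.mpr h)

lemma pid_apply {e : PEquiv (Fin n) (Fin n)} (hpe : IsPid e) {i : Fin n}
    (hi : (e i).isSome) : e i = some i := by
  obtain ⟨j, hj⟩ := Option.isSome_iff_exists.mp hi
  rw [hj, hpe i j hj]

lemma symm_eq_self {e : PEquiv (Fin n) (Fin n)} (hpe : IsPid e) : e.symm = e := by
  apply PEquiv.ext; intro i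
  cases h : e i with
  | some j =>
      have hji := hpe _ _ h; subst hji
      exact e.eq_some_iff.mpr h
  | none =>
      cases h2 : e.symm i with
      | none => rfl
      | some j =>
          have h3 : e j = some i := e.eq_some_iff.mp h2
          have := hpe _ _ h3; subst this
          rw [h] at h3; cases h3

lemma g_eq_none {x : GWI G n} {i : Fin n} (h : x.a i = none) : x.g i = none := by
  cases hg : x.g i with
  | none => rfl
  | some w =>
      have := (x.compat i).mp (by simp [hg])
      rw [h] at this; simp at this

lemma g_isSome {x : GWI G n} {i j : Fin n} (h : x.a i = some j) : ∃ w, x.g i = some w := by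
  have := (x.compat i).mpr (by simp [h])
  exact Option.isSome_iff_exists.mp this

lemma mul_assoc' (x y z : GWI G n) : mul (mul x y) z = mul x (mul y z) := by
  refine ext ?_ ?_
  · funext i
    show omul (omul (x.g i) ((x.a i).bind y.g)) (((x.a.trans y.a) i).bind z.g)
       = omul (x.g i) ((x.a i).bind fun j => omul (y.g j) ((y.a j).bind z.g))
    rw [trans_apply']
    cases hx : x.a i with
    | none => simp [g_eq_none hx, omul]
    | some j =>
        obtain ⟨w, hw⟩ := g_isSome hx
        rw [hw]
        simp only [Option.bind_some]
        cases hy : y.a j with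
        | none => simp [g_eq_none hy, omul]
        | some k =>
            obtain ⟨u, hu⟩ := g_isSome hy
            rw [hu]
            simp only [Option.bind_some]
            cases z.g k <;> simp [omul, mul_assoc]
  · exact PEquiv.trans_assoc _ _ _

lemma one_mul' (x : GWI G n) : mul one x = x := by
  refine ext ?_ ?_
  · funext i
    show omul (some 1) (((PEquiv.refl (Fin n)) i).bind x.g) = x.g i
    cases hg : x.g i <;> simp [PEquiv.refl, omul, hg]
  · exact PEquiv.refl_trans x.a


/-- The unit `(H; π)` of `G ≀ I_n` associated to a permutation and a tuple. -/
def cnj (H : Fin n → G) (π : Equiv.Perm (Fin n)) : GWI G n where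
  g := fun i => some (H i)
  a := π.toPEquiv
  compat := by intro i; simp [Equiv.toPEquiv_apply]

lemma inv_cnj_g (H : Fin n → G) (π : Equiv.Perm (Fin n)) (i : Fin n) :
    (inv (cnj H π)).g i = some (H (π.symm i))⁻¹ := by
  show (((π.toPEquiv).symm i).bind fun j => some (H j)).map (·⁻¹) = _
  rw [← Equiv.toPEquiv_symm, Equiv.toPEquiv_apply]
  rfl

lemma inv_mul_cnj (H : Fin n → G) (π : Equiv.Perm (Fin n)) :
    mul (inv (cnj H π)) (cnj H π) = one := by
  refine ext ?_ ?_
  · funext i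
    show omul ((inv (cnj H π)).g i) (((π.toPEquiv.symm) i).bind fun j => some (H j)) = some 1
    rw [inv_cnj_g, ← Equiv.toPEquiv_symm, Equiv.toPEquiv_apply]
    simp [omul]
  · show (π.toPEquiv.symm).trans π.toPEquiv = PEquiv.refl (Fin n)
    rw [← Equiv.toPEquiv_symm, ← Equiv.toPEquiv_trans, Equiv.symm_trans_self,
      Equiv.toPEquiv_refl]

def conj (c x : GWI G n) : GWI G n := mul (mul c x) (inv c)

lemma conj_mul (H : Fin n → G) (π : Equiv.Perm (Fin n)) (x y : GWI G n) :
    conj (cnj H π) (mul x y) = mul (conj (cnj H π) x) (conj (cnj H π) y) := by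
  unfold conj
  simp only [mul_assoc']
  rw [← mul_assoc' (inv (cnj H π)) (cnj H π), inv_mul_cnj, one_mul']

lemma conj_a (H : Fin n → G) (π : Equiv.Perm (Fin n)) (x : GWI G n) (hx : IsPid x.a)
    (i : Fin n) : (conj (cnj H π) x).a i = (x.a (π i)).map (fun _ => i) := by
  show ((π.toPEquiv.trans x.a).trans (π.toPEquiv.symm)) i = _
  rw [trans_apply', trans_apply', Equiv.toPEquiv_apply, Option.bind_some]
  cases hj : x.a (π i) with
  | none => rfl
  | some j =>
      have := hx _ _ hj; subst this
      rw [← Equiv.toPEquiv_symm, Option.bind_some, Equiv.toPEquiv_apply]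
      simp

lemma conj_g (H : Fin n → G) (π : Equiv.Perm (Fin n)) (x : GWI G n) (hx : IsPid x.a)
    (i : Fin n) :
    (conj (cnj H π) x).g i = (x.g (π i)).map (fun w => H i * w * (H i)⁻¹) := by
  show omul (omul (some (H i)) ((π.toPEquiv i).bind x.g))
      (((π.toPEquiv.trans x.a) i).bind (inv (cnj H π)).g) = _
  rw [trans_apply', Equiv.toPEquiv_apply]
  simp only [Option.bind_some]
  cases ha : x.a (π i) with
  | none => rw [g_eq_none ha]; rfl
  | some j =>
      have := hx _ _ ha; subst this
      obtain ⟨w, hw⟩ := g_isSome ha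
      rw [hw, Option.bind_some, inv_cnj_g]
      simp [omul, mul_assoc]

lemma conj_conj (π : Equiv.Perm (Fin n)) (x : GWI G n) (hx : IsPid x.a) :
    conj (cnj (fun _ => (1 : G)) π⁻¹) (conj (cnj (fun _ => (1 : G)) π) x) = x := by
  have hpid2 : IsPid (conj (cnj (fun _ => (1 : G)) π) x).a := by
    intro i j h
    rw [conj_a _ _ _ hx] at h
    cases hxa : x.a (π i) <;> rw [hxa] at h <;> simp_all
  refine ext ?_ ?_
  · funext i
    rw [conj_g _ _ _ hpid2, conj_g _ _ _ hx]
    have : π ((π⁻¹ : Equiv.Perm (Fin n)) i) = i := Equiv.apply_symm_apply π i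
    rw [this]
    cases x.g i <;> simp
  · apply PEquiv.ext; intro i
    rw [conj_a _ _ _ hpid2, conj_a _ _ _ hx]
    have : π ((π⁻¹ : Equiv.Perm (Fin n)) i) = i := Equiv.apply_symm_apply π i
    rw [this]
    cases hxa : x.a i with
    | none => simp
    | some j => simp [hx _ _ hxa]


/-- The idempotent `(1_e; e)` of `G ≀ I_n`. -/
def idemOf (e : PEquiv (Fin n) (Fin n)) : GWI G n where
  g := fun i => (e i).map (fun _ => (1 : G))
  a := e
  compat := by intro i; cases h : e i <;> simp [h]

lemma idemOf_idem {e : PEquiv (Fin n) (Fin n)} (he : e.trans e = e) (hpe : IsPid e) :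
    mul (idemOf e : GWI G n) (idemOf e) = idemOf e := by
  refine ext ?_ ?_
  · funext i
    show omul ((e i).map fun _ => (1:G)) ((e i).bind fun j => (e j).map fun _ => (1:G))
        = (e i).map fun _ => (1:G)
    cases h : e i with
    | none => rfl
    | some j =>
        have := hpe _ _ h; subst this
        simp [h, omul]
  · exact he

/-- Membership of `domEnum` values in the domain. -/
lemma isSome_domEnum (e : PEquiv (Fin n) (Fin n)) (k : Fin (rk e)) :
    (e (domEnum e k)).isSome := by
  have h := ((Finset.univ.filter fun i => (e i).isSome).orderIsoOfFin rfl k).2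
  exact (Finset.mem_filter.mp h).2

lemma e_domEnum {e : PEquiv (Fin n) (Fin n)} (hpe : IsPid e) (k : Fin (rk e)) :
    e (domEnum e k) = some (domEnum e k) :=
  pid_apply hpe (isSome_domEnum e k)

section tpm

variable {m : ℕ}

/-- The permutation of `Fin n` carrying the domain of `f` to the domain of `e`
via the order enumerations twisted by `σ`, and some bijection between the complements. -/
noncomputable def tpm (e f : PEquiv (Fin n) (Fin n)) (hre : rk e = m) (hrf : rk f = m)
    (σ : Equiv.Perm (Fin m)) : Equiv.Perm (Fin n) :=
  letI sE := Finset.univ.filter fun i => (e i).isSome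
  letI sF := Finset.univ.filter fun i => (f i).isSome
  letI A : {i // i ∈ sF} ≃ {i // i ∈ sE} :=
    ((sF.orderIsoOfFin rfl).toEquiv.symm.trans (finCongr hrf)).trans
      ((σ.trans (finCongr hre.symm)).trans (sE.orderIsoOfFin rfl).toEquiv)
  letI B : {i // ¬ i ∈ sF} ≃ {i // ¬ i ∈ sE} :=
    Fintype.equivOfCardEq (by
      rw [Fintype.card_subtype_compl, Fintype.card_subtype_compl]
      congr 1
      show Fintype.card sF = Fintype.card sE
      rw [Fintype.card_coe, Fintype.card_coe]
      show rk f = rk e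
      rw [hre, hrf])
  (Equiv.sumCompl (· ∈ sF)).symm.trans ((A.sumCongr B).trans (Equiv.sumCompl (· ∈ sE)))

lemma notmem_prop {s : Finset (Fin n)} (z : {i // ¬ i ∈ s}) : ↑z ∉ s := z.2

lemma tpm_isSome (e f : PEquiv (Fin n) (Fin n)) (hre : rk e = m) (hrf : rk f = m)
    (σ : Equiv.Perm (Fin m)) (i : Fin n) :
    (f i).isSome ↔ (e (tpm e f hre hrf σ i)).isSome := by
  set sE := Finset.univ.filter fun i => (e i).isSome with hsE
  set sF := Finset.univ.filter fun i => (f i).isSome with hsF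
  have hmemE : ∀ j : Fin n, j ∈ sE ↔ (e j).isSome := by
    intro j; simp [hsE]
  have hmemF : ∀ j : Fin n, j ∈ sF ↔ (f j).isSome := by
    intro j; simp [hsF]
  by_cases hi : i ∈ sF
  · rw [show tpm e f hre hrf σ i = _ from rfl]
    unfold tpm
    rw [Equiv.trans_apply, Equiv.sumCompl_symm_apply_of_pos hi]
    simp only [Equiv.trans_apply, Equiv.sumCongr_apply, Sum.map_inl, Equiv.sumCompl_apply_inl]
    constructor
    · intro _; exact (hmemE _).mp (Subtype.prop _)
    · intro _; exact (hmemF _).mp hi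
  · unfold tpm
    rw [Equiv.trans_apply, Equiv.sumCompl_symm_apply_of_neg hi]
    simp only [Equiv.trans_apply, Equiv.sumCongr_apply, Sum.map_inr, Equiv.sumCompl_apply_inr]
    refine iff_of_false (fun h => hi ((hmemF i).mpr h)) (fun h => ?_)
    exact notmem_prop _ ((hmemE _).mpr h)

lemma tpm_domEnum (e f : PEquiv (Fin n) (Fin n)) (hre : rk e = m) (hrf : rk f = m)
    (σ : Equiv.Perm (Fin m)) (k : Fin m) :
    tpm e f hre hrf σ (domEnum f (Fin.cast hrf.symm k))
      = domEnum e (Fin.cast hre.symm (σ k)) := by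
  set sE := Finset.univ.filter fun i => (e i).isSome with hsE
  set sF := Finset.univ.filter fun i => (f i).isSome with hsF
  have hi : domEnum f (Fin.cast hrf.symm k) ∈ sF :=
    ((sF.orderIsoOfFin rfl) (Fin.cast hrf.symm k)).2
  unfold tpm
  rw [Equiv.trans_apply, Equiv.sumCompl_symm_apply_of_pos hi]
  simp only [Equiv.trans_apply, Equiv.sumCongr_apply, Sum.map_inl, Equiv.sumCompl_apply_inl]
  have h1 : (⟨domEnum f (Fin.cast hrf.symm k), hi⟩ : {i // i ∈ sF})
      = (sF.orderIsoOfFin rfl).toEquiv (Fin.cast hrf.symm k) := Subtype.ext rfl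
  rw [h1]
  show ((sE.orderIsoOfFin rfl) (Fin.cast hre.symm (σ (Fin.cast hrf ((sF.orderIsoOfFin rfl).symm ((sF.orderIsoOfFin rfl) (Fin.cast hrf.symm k)))))) : Fin n) = _
  rw [OrderIso.symm_apply_apply]
  have hkk : Fin.cast hrf (Fin.cast hrf.symm k) = k := by simp [Fin.ext_iff]
  erw [hkk]
  rfl

end tpm


lemma conj_a_eq {e f : PEquiv (Fin n) (Fin n)} (hpf : IsPid f) (π : Equiv.Perm (Fin n))
    (hP1 : ∀ i, (f i).isSome ↔ (e (π i)).isSome) (x : GWI G n) (hxa : x.a = e)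
    (hx : IsPid x.a) (H : Fin n → G) : (conj (cnj H π) x).a = f := by
  apply PEquiv.ext; intro i
  rw [conj_a _ _ _ hx, hxa]
  by_cases hfi : (f i).isSome
  · obtain ⟨j, hj⟩ := Option.isSome_iff_exists.mp ((hP1 i).mp hfi)
    rw [hj, pid_apply hpf hfi]
    rfl
  · have h2 : e (π i) = none :=
      Option.not_isSome_iff_eq_none.mp (fun h => hfi ((hP1 i).mpr h))
    rw [h2, Option.not_isSome_iff_eq_none.mp hfi]
    rfl

lemma transport {m : ℕ} {T : Set (GWI G n)}
    (Tconj : ∀ a : GWI G n, ∀ x ∈ T, mul (mul a x) (inv a) ∈ T)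
    {e f : PEquiv (Fin n) (Fin n)} (hpe : IsPid e) (hpf : IsPid f)
    (hre : rk e = m) (hrf : rk f = m) (σ : Fin m → Fin m) (π : Equiv.Perm (Fin n))
    (hP1 : ∀ i, (f i).isSome ↔ (e (π i)).isSome)
    (hP2 : ∀ k : Fin m,
      π (domEnum f (Fin.cast hrf.symm k)) = domEnum e (Fin.cast hre.symm (σ k)))
    (v : Fin m → G)
    (hv : ∃ x ∈ T, x.a = e ∧ ∀ k : Fin m,
      x.g (domEnum e (Fin.cast hre.symm k)) = some (v k)) :
    ∃ y ∈ T, y.a = f ∧ ∀ k : Fin m,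
      y.g (domEnum f (Fin.cast hrf.symm k)) = some (v (σ k)) := by
  obtain ⟨x, hxT, hxa, hxg⟩ := hv
  have hpx : IsPid x.a := by rw [hxa]; exact hpe
  refine ⟨conj (cnj (fun _ => (1:G)) π) x, Tconj _ _ hxT,
    conj_a_eq hpf π hP1 x hxa hpx _, ?_⟩
  intro k
  rw [conj_g _ _ _ hpx, hP2 k, hxg (σ k)]
  simp

end GWI

/-- Let `T` be a normal subsemigroup (full, inverse, self-conjugate subsemigroup) of
`G ≀ I_n` contained in the centralizer of the idempotents.  For idempotents `e, f` of
`I_n` of equal rank `m`, the groups `T_e = T ∩ H_e` and `T_f = T ∩ H_f` are isomorphic;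
moreover the image `T_e Ω ⊆ G^m` (obtained by deleting the zero entries) is a normal,
permutation-invariant subgroup of `G^m`, and `T_e Ω = T_f Ω`. -/
theorem normal_subsemigroup_sections (G : Type*) [Group G] (n m : ℕ)
    (T : Set (GWI G n))
    (Tmul : ∀ x ∈ T, ∀ y ∈ T, GWI.mul x y ∈ T)
    (Tfull : ∀ x : GWI G n, GWI.mul x x = x → x ∈ T)
    (Tinv : ∀ x ∈ T, GWI.inv x ∈ T)
    (Tconj : ∀ a : GWI G n, ∀ x ∈ T, GWI.mul (GWI.mul a x) (GWI.inv a) ∈ T)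
    (Tcent : ∀ x ∈ T, ∀ f : GWI G n, GWI.mul f f = f → GWI.mul f x = GWI.mul x f)
    (e f : PEquiv (Fin n) (Fin n)) (he : e.trans e = e) (hf : f.trans f = f)
    (hre : GWI.rk e = m) (hrf : GWI.rk f = m) :
    (∃ ψ : {x : GWI G n // x ∈ T ∧ x.a = e} ≃ {x : GWI G n // x ∈ T ∧ x.a = f},
      ∀ x y z : {x : GWI G n // x ∈ T ∧ x.a = e},
        (z : GWI G n) = GWI.mul (x : GWI G n) (y : GWI G n) →
          (ψ z : GWI G n) = GWI.mul (ψ x : GWI G n) (ψ y : GWI G n)) ∧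
    (∃ S : Subgroup (Fin m → G), S.Normal ∧
      (∀ σ : Equiv.Perm (Fin m), ∀ v ∈ S, v ∘ σ ∈ S) ∧
      (S : Set (Fin m → G)) =
        {v | ∃ x ∈ T, x.a = e ∧ ∀ k : Fin m,
          x.g (GWI.domEnum e (Fin.cast hre.symm k)) = some (v k)} ∧
      (S : Set (Fin m → G)) =
        {v | ∃ x ∈ T, x.a = f ∧ ∀ k : Fin m,
          x.g (GWI.domEnum f (Fin.cast hrf.symm k)) = some (v k)}) := by
  classical
  have hpe : GWI.IsPid e := GWI.pid_of_idem he
  have hpf : GWI.IsPid f := GWI.pid_of_idem hf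
  constructor
  · -- the isomorphism
    set π := GWI.tpm e f hre hrf 1 with hπdef
    have hP1 : ∀ i, (f i).isSome ↔ (e (π i)).isSome := GWI.tpm_isSome e f hre hrf 1
    have hP1' : ∀ i, (e i).isSome ↔ (f (π⁻¹ i)).isSome := by
      intro i
      have h := hP1 (π⁻¹ i)
      rw [show π (π⁻¹ i) = i from Equiv.apply_symm_apply π i] at h
      exact h.symm
    refine ⟨⟨fun x => ⟨GWI.conj (GWI.cnj (fun _ => 1) π) x.1,
        Tconj _ _ x.2.1, GWI.conj_a_eq hpf π hP1 x.1 x.2.2 (by rw [x.2.2]; exact hpe) _⟩,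
      fun y => ⟨GWI.conj (GWI.cnj (fun _ => 1) π⁻¹) y.1,
        Tconj _ _ y.2.1, GWI.conj_a_eq hpe π⁻¹ hP1' y.1 y.2.2 (by rw [y.2.2]; exact hpf) _⟩,
      ?_, ?_⟩, ?_⟩
    · intro x
      apply Subtype.ext
      exact GWI.conj_conj π x.1 (by rw [x.2.2]; exact hpe)
    · intro y
      apply Subtype.ext
      have h := GWI.conj_conj π⁻¹ y.1 (by rw [y.2.2]; exact hpf)
      rwa [inv_inv] at h
    · intro x y z hz
      show GWI.conj _ z.1 = GWI.mul (GWI.conj _ x.1) (GWI.conj _ y.1)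
      rw [hz]
      exact GWI.conj_mul _ _ _ _
  · -- the subgroup
    set Sset := {v : Fin m → G | ∃ x ∈ T, x.a = e ∧ ∀ k : Fin m,
        x.g (GWI.domEnum e (Fin.cast hre.symm k)) = some (v k)} with hSsetdef
    have hone : (1 : Fin m → G) ∈ Sset := by
      refine ⟨GWI.idemOf e, Tfull _ (GWI.idemOf_idem he hpe), rfl, ?_⟩
      intro k
      show (e (GWI.domEnum e (Fin.cast hre.symm k))).map (fun _ => (1:G)) = _
      rw [GWI.e_domEnum hpe]
      rfl
    have hmul : ∀ v ∈ Sset, ∀ w ∈ Sset, v * w ∈ Sset := by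
      rintro v ⟨x, hxT, hxa, hxg⟩ w ⟨y, hyT, hya, hyg⟩
      refine ⟨GWI.mul x y, Tmul x hxT y hyT,
        by show x.a.trans y.a = e; rw [hxa, hya, he], ?_⟩
      intro k
      show omul (x.g (GWI.domEnum e (Fin.cast hre.symm k)))
        ((x.a (GWI.domEnum e (Fin.cast hre.symm k))).bind y.g) = _
      rw [hxg k, hxa, GWI.e_domEnum hpe, Option.bind_some, hyg k]
      rfl
    have hinv : ∀ v ∈ Sset, v⁻¹ ∈ Sset := by
      rintro v ⟨x, hxT, hxa, hxg⟩
      refine ⟨GWI.inv x, Tinv x hxT,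
        by show x.a.symm = e; rw [hxa, GWI.symm_eq_self hpe], ?_⟩
      intro k
      show ((x.a.symm (GWI.domEnum e (Fin.cast hre.symm k))).bind x.g).map (·⁻¹) = _
      rw [hxa, GWI.symm_eq_self hpe, GWI.e_domEnum hpe, Option.bind_some, hxg k]
      rfl
    refine ⟨⟨⟨⟨Sset, fun ha hb => hmul _ ha _ hb⟩, hone⟩, fun ha => hinv _ ha⟩,
      ?_, ?_, rfl, ?_⟩
    · -- normality
      refine ⟨fun v hv h => ?_⟩
      obtain ⟨x, hxT, hxa, hxg⟩ := hv
      have hpx : GWI.IsPid x.a := by rw [hxa]; exact hpe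
      set s := Finset.univ.filter fun j => (e j).isSome with hsdef
      set o := s.orderIsoOfFin (rfl : s.card = GWI.rk e) with hodef
      set H : Fin n → G := fun i =>
        if hi : i ∈ s then h (Fin.cast hre (o.symm ⟨i, hi⟩)) else 1 with hHdef
      have hP1e : ∀ i, (e i).isSome ↔ (e ((1 : Equiv.Perm (Fin n)) i)).isSome := by
        intro i; rw [Equiv.Perm.coe_one]; exact Iff.rfl
      refine ⟨GWI.conj (GWI.cnj H 1) x, Tconj _ _ hxT,
        GWI.conj_a_eq hpe 1 hP1e x hxa hpx _, ?_⟩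
      intro k
      have hik : ((1 : Equiv.Perm (Fin n)) (GWI.domEnum e (Fin.cast hre.symm k)))
          = GWI.domEnum e (Fin.cast hre.symm k) := rfl
      rw [GWI.conj_g _ _ _ hpx, hik, hxg k]
      have hmem : GWI.domEnum e (Fin.cast hre.symm k) ∈ s :=
        (o (Fin.cast hre.symm k)).2
      have hH : H (GWI.domEnum e (Fin.cast hre.symm k)) = h k := by
        rw [hHdef]
        simp only [dif_pos hmem]
        have h1 : (⟨GWI.domEnum e (Fin.cast hre.symm k), hmem⟩ : {i // i ∈ s})
            = o (Fin.cast hre.symm k) := Subtype.ext rfl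
        rw [h1, OrderIso.symm_apply_apply]
        exact congrArg h (Fin.ext rfl)
      rw [Option.map_some, hH]
      rfl
    · -- permutation invariance
      intro σ v hv
      exact GWI.transport Tconj hpe hpe hre hre (⇑σ) (GWI.tpm e e hre hre σ)
        (GWI.tpm_isSome e e hre hre σ) (GWI.tpm_domEnum e e hre hre σ) v hv
    · -- the image over f
      apply Set.Subset.antisymm
      · intro v hv
        exact GWI.transport Tconj hpe hpf hre hrf id (GWI.tpm e f hre hrf 1)
          (GWI.tpm_isSome e f hre hrf 1) (GWI.tpm_domEnum e f hre hrf 1) v hv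
      · intro v hv
        exact GWI.transport Tconj hpf hpe hrf hre id (GWI.tpm f e hrf hre 1)
          (GWI.tpm_isSome f e hrf hre 1) (GWI.tpm_domEnum f e hrf hre 1) v hv
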